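/- arXiv:1311.5939 — 4 statements merged into one kernel-verified Lean document; each statement's English description precedes it below -/
import Mathlib

section
/- The variance of a hypergeometric random variable with parameters N, M, n equals n·M·(N−M)·(N−n)/(N²·(N−1)). -/
/-!
The factorial moments of the hypergeometric distribution are
`E[C(X, r)] = C(M, r) C(n, r) / C(N, r)`: absorbing `C(i, r) C(M, i) = C(M, r) C(M - r, i - r)`
turns the sum into a Vandermonde convolution. The variance then follows from
`X² = 2 C(X, 2) + X`.
-/

open Finset

theorem Nat.sum_range_choose_mul_choose (a b n : ℕ) :
    ∑ i ∈ range (n + 1), a.choose i * b.choose (n - i) = (a + b).choose n := by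
  rw [Nat.add_choose_eq, Nat.sum_antidiagonal_eq_sum_range_succ_mk]

theorem Nat.sum_range_choose_mul_choose_mul_choose {M K n r : ℕ} (hrn : r ≤ n) :
    ∑ i ∈ range (n + 1), i.choose r * (M.choose i * K.choose (n - i))
      = M.choose r * (M - r + K).choose (n - r) := by
  obtain ⟨m, rfl⟩ := Nat.exists_eq_add_of_le hrn
  rw [add_assoc, sum_range_add, sum_eq_zero fun i hi =>
    by rw [Nat.choose_eq_zero_of_lt (mem_range.mp hi), zero_mul], zero_add,
    Nat.add_sub_cancel_left, ← Nat.sum_range_choose_mul_choose, mul_sum]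
  refine sum_congr rfl fun j _ => ?_
  rw [← mul_assoc, mul_comm ((r + j).choose r), Nat.choose_mul (Nat.le_add_right r j),
    Nat.add_sub_cancel_left, Nat.add_sub_add_left, mul_assoc]

theorem Nat.hypergeometric_factorial_moment (M K n r : ℕ) :
    (∑ i ∈ range (n + 1), i.choose r * (M.choose i * K.choose (n - i))) * (M + K).choose r
      = M.choose r * n.choose r * (M + K).choose n := by
  rcases le_or_gt r n with hrn | hnr
  · rw [Nat.sum_range_choose_mul_choose_mul_choose hrn]
    rcases le_or_gt r M with hrM | hMr
    · rw [mul_assoc, mul_assoc, mul_comm (n.choose r), Nat.choose_mul hrn,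
        Nat.sub_add_comm hrM, mul_comm ((M + K).choose r)]
    · simp [Nat.choose_eq_zero_of_lt hMr]
  · rw [sum_eq_zero fun i hi => by
      rw [Nat.choose_eq_zero_of_lt ((mem_range_succ_iff.mp hi).trans_lt hnr), zero_mul],
      Nat.choose_eq_zero_of_lt hnr]
    simp

theorem hypergeometric_factorial_moment {M K n : ℕ} (hn : n ≤ M + K) (r : ℕ) :
    ∑ i ∈ range (n + 1),
        (i.choose r : ℚ) * ((M.choose i * K.choose (n - i) : ℚ) / (M + K).choose n)
      = M.choose r * n.choose r / (M + K).choose r := by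
  rcases le_or_gt r (M + K) with hr | hr
  · simp_rw [mul_div_assoc']
    rw [← sum_div, div_eq_div_iff (by exact_mod_cast (Nat.choose_pos hn).ne')
      (by exact_mod_cast (Nat.choose_pos hr).ne')]
    exact_mod_cast Nat.hypergeometric_factorial_moment M K n r
  · rw [sum_eq_zero fun i hi => by
      rw [Nat.choose_eq_zero_of_lt ((mem_range_succ_iff.mp hi).trans_lt (hn.trans_lt hr)),
        Nat.cast_zero, zero_mul], Nat.choose_eq_zero_of_lt hr, Nat.cast_zero, div_zero]

theorem hypergeom_variance (N M n : ℕ) (hMN : M ≤ N) (hnN : n ≤ N) (hN : 2 ≤ N) :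
    (∑ i ∈ Finset.range (n + 1),
        (i : ℚ) ^ 2 * ((M.choose i * (N - M).choose (n - i) : ℚ) / (N.choose n : ℚ)))
      - (∑ i ∈ Finset.range (n + 1),
        (i : ℚ) * ((M.choose i * (N - M).choose (n - i) : ℚ) / (N.choose n : ℚ))) ^ 2
      = (n : ℚ) * M * ((N : ℚ) - M) * ((N : ℚ) - n) / ((N : ℚ) ^ 2 * ((N : ℚ) - 1)) := by
  obtain ⟨K, rfl⟩ := Nat.exists_eq_add_of_le hMN
  rw [Nat.add_sub_cancel_left]
  have hmean := hypergeometric_factorial_moment hnN 1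
  have hfactorial := hypergeometric_factorial_moment hnN 2
  simp only [Nat.choose_one_right] at hmean
  have hsecond : ∑ i ∈ range (n + 1),
        (i : ℚ) ^ 2 * ((M.choose i * K.choose (n - i) : ℚ) / (M + K).choose n)
      = 2 * ∑ i ∈ range (n + 1),
          (i.choose 2 : ℚ) * ((M.choose i * K.choose (n - i) : ℚ) / (M + K).choose n)
        + ∑ i ∈ range (n + 1),
          (i : ℚ) * ((M.choose i * K.choose (n - i) : ℚ) / (M + K).choose n) := by
    rw [mul_sum, ← sum_add_distrib]
    refine sum_congr rfl fun i _ => ?_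
    rw [Nat.cast_choose_two]
    ring
  have h2N : (2 : ℚ) ≤ (M + K : ℕ) := by exact_mod_cast hN
  have hN0 : ((M + K : ℕ) : ℚ) ≠ 0 := by linarith
  have hN1 : ((M + K : ℕ) : ℚ) - 1 ≠ 0 := by linarith
  rw [hsecond, hfactorial, hmean, Nat.cast_choose_two, Nat.cast_choose_two, Nat.cast_choose_two]
  field_simp
  push_cast
  ring
end

section
/- Hoeffding's bound for the hypergeometric upper tail: with p = M/N and k = (p+t)·n for t ≥ 0 with p + t < 1 and p > 0, the tail probability H(M,N,n,k) = ∑_{i≥k} h(M,N,n,i) is at most ((p/(p+t))^{p+t} · ((1−p)/(1−p−t))^{1−p−t})^n. -/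
/-!
Chernoff's method: for `l ≥ 1` the tail beyond `k` is at most `l ^ (-k)` times the generating
function `E[l ^ X]` of the hypergeometric variable `X`. Expanding `E[(1 + x) ^ X]` in powers of `x`
gives `∑ j, C(n, j) C(M, j) / C(N, j) x ^ j`, and `C(M, j) / C(N, j) ≤ p ^ j`, so `E[l ^ X]` is at
most the binomial value `(1 + p (l - 1)) ^ n`. Optimising over `l` gives the bound.
-/

open Finset

namespace Nat

theorem descFactorial_mul_pow_le_descFactorial_mul_pow {M N : ℕ} (h : M ≤ N) (j : ℕ) :
    M.descFactorial j * N ^ j ≤ N.descFactorial j * M ^ j := by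
  induction j with
  | zero => simp
  | succ j ih =>
    have step : (M - j) * N ≤ (N - j) * M := by
      rw [Nat.sub_mul, Nat.sub_mul, Nat.mul_comm M N]
      exact Nat.sub_le_sub_left (Nat.mul_le_mul_left j h) _
    calc M.descFactorial (j + 1) * N ^ (j + 1)
        = ((M - j) * N) * (M.descFactorial j * N ^ j) := by
          rw [descFactorial_succ, pow_succ]; ring
      _ ≤ ((N - j) * M) * (N.descFactorial j * M ^ j) := Nat.mul_le_mul step ih
      _ = N.descFactorial (j + 1) * M ^ (j + 1) := by
          rw [descFactorial_succ, pow_succ]; ring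

theorem choose_mul_pow_le_choose_mul_pow {M N : ℕ} (h : M ≤ N) (j : ℕ) :
    M.choose j * N ^ j ≤ N.choose j * M ^ j := by
  have := descFactorial_mul_pow_le_descFactorial_mul_pow h j
  rw [descFactorial_eq_factorial_mul_choose, descFactorial_eq_factorial_mul_choose,
    Nat.mul_assoc, Nat.mul_assoc] at this
  exact Nat.le_of_mul_le_mul_left this (factorial_pos j)

theorem sum_range_choose_mul_choose_mul_choose_s7 {M N n j : ℕ} (hMN : M ≤ N) (hjn : j ≤ n) :
    ∑ i ∈ range (n + 1), M.choose i * i.choose j * (N - M).choose (n - i)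
      = M.choose j * (N - j).choose (n - j) := by
  rcases lt_or_ge M j with hMj | hjM
  · refine (sum_eq_zero fun i _ => ?_).trans (by simp [choose_eq_zero_of_lt hMj])
    rcases lt_or_ge M i with hMi | hiM
    · simp [choose_eq_zero_of_lt hMi]
    · simp [choose_eq_zero_of_lt (hiM.trans_lt hMj)]
  obtain ⟨m, rfl⟩ := Nat.exists_eq_add_of_le hjn
  have hNj : N - j = (M - j) + (N - M) := by omega
  rw [Nat.add_sub_cancel_left, show j + m + 1 = j + (m + 1) by ring, sum_range_add,
    sum_eq_zero fun i hi => by simp [choose_eq_zero_of_lt (mem_range.1 hi)], zero_add, hNj,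
    add_choose_eq, Nat.sum_antidiagonal_eq_sum_range_succ_mk, mul_sum]
  refine sum_congr rfl fun a ha => ?_
  rw [choose_mul (Nat.le_add_right j a), Nat.add_sub_cancel_left, Nat.add_sub_add_left,
    Nat.mul_assoc]

end Nat

theorem sum_range_choose_mul_choose_mul_add_one_pow {R : Type*} [CommSemiring R] {M N : ℕ}
    (hMN : M ≤ N) (n : ℕ) (x : R) :
    ∑ i ∈ range (n + 1), (M.choose i * (N - M).choose (n - i) : R) * (x + 1) ^ i
      = ∑ j ∈ range (n + 1), (M.choose j * (N - j).choose (n - j) : R) * x ^ j := by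
  have expand : ∀ i ∈ range (n + 1), (x + 1) ^ i = ∑ j ∈ range (n + 1), x ^ j * i.choose j := by
    intro i hi
    rw [add_pow, sum_subset (range_subset_range.2 (mem_range.1 hi)) fun j _ hj => by
      simp [Nat.choose_eq_zero_of_lt (not_lt.1 (mt mem_range.2 hj))]]
    simp
  rw [sum_congr rfl fun i hi => by rw [expand i hi, mul_sum], sum_comm]
  refine sum_congr rfl fun j hj => ?_
  have inner := congrArg (Nat.cast : ℕ → R)
    (Nat.sum_range_choose_mul_choose_mul_choose_s7 hMN (Nat.le_of_lt_succ (mem_range.1 hj)))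
  push_cast at inner
  rw [← inner, sum_mul]
  exact sum_congr rfl fun i _ => by ring

theorem sum_choose_mul_choose_div_choose_mul_pow_le {M N n : ℕ} (hMN : M ≤ N) (hN : 0 < N)
    (hnN : n ≤ N) {l : ℝ} (hl : 1 ≤ l) :
    ∑ i ∈ range (n + 1), (M.choose i * (N - M).choose (n - i) : ℝ) / N.choose n * l ^ i
      ≤ (1 + (M : ℝ) / N * (l - 1)) ^ n := by
  have hchoose : (0 : ℝ) < N.choose n := by exact_mod_cast Nat.choose_pos hnN
  have term_le : ∀ j ∈ range (n + 1), (M.choose j * (N - j).choose (n - j) : ℝ)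
      ≤ N.choose n * n.choose j * ((M : ℝ) / N) ^ j := by
    intro j hj
    have key : M.choose j * (N - j).choose (n - j) * N ^ j ≤ N.choose n * n.choose j * M ^ j := by
      rw [Nat.choose_mul (Nat.le_of_lt_succ (mem_range.1 hj)), Nat.mul_right_comm,
        Nat.mul_right_comm (N.choose j)]
      exact Nat.mul_le_mul_right _ (Nat.choose_mul_pow_le_choose_mul_pow hMN j)
    rw [div_pow, mul_div_assoc', le_div_iff₀ (by positivity)]
    exact_mod_cast key
  calc ∑ i ∈ range (n + 1), (M.choose i * (N - M).choose (n - i) : ℝ) / N.choose n * l ^ i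
      = (∑ j ∈ range (n + 1), (M.choose j * (N - j).choose (n - j) : ℝ) * (l - 1) ^ j)
          / N.choose n := by
        rw [← sum_range_choose_mul_choose_mul_add_one_pow hMN, sub_add_cancel, sum_div]
        exact sum_congr rfl fun i _ => by ring
    _ ≤ (∑ j ∈ range (n + 1), N.choose n * n.choose j * ((M : ℝ) / N) ^ j * (l - 1) ^ j)
          / N.choose n := by
        gcongr ?_ / _
        exact sum_le_sum fun j hj =>
          mul_le_mul_of_nonneg_right (term_le j hj) (pow_nonneg (by linarith) j)
    _ = (1 + (M : ℝ) / N * (l - 1)) ^ n := by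
        rw [add_comm 1, add_pow, sum_div]
        refine sum_congr rfl fun j _ => ?_
        rw [one_pow, mul_one, mul_pow]
        field_simp

theorem sum_filter_le_le_rpow_neg_mul_sum_mul_pow {s : Finset ℕ} {w : ℕ → ℝ}
    (hw : ∀ i ∈ s, 0 ≤ w i) {l : ℝ} (hl : 1 ≤ l) (k : ℝ) [DecidablePred fun i : ℕ => k ≤ i] :
    ∑ i ∈ s.filter (fun i : ℕ => k ≤ i), w i ≤ l ^ (-k) * ∑ i ∈ s, w i * l ^ i := by
  rw [mul_sum]
  calc ∑ i ∈ s.filter (fun i : ℕ => k ≤ i), w i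
      ≤ ∑ i ∈ s.filter (fun i : ℕ => k ≤ i), l ^ (-k) * (w i * l ^ i) := by
        refine sum_le_sum fun i hi => ?_
        have hik := (mem_filter.1 hi).2
        have : 1 ≤ l ^ (-k) * l ^ i := by
          rw [← Real.rpow_natCast, ← Real.rpow_add (by linarith)]
          exact Real.one_le_rpow hl (by linarith)
        nlinarith [hw i (mem_filter.1 hi).1]
    _ ≤ ∑ i ∈ s, l ^ (-k) * (w i * l ^ i) :=
        sum_le_sum_of_subset_of_nonneg (filter_subset _ _) fun i hi _ => by
          have := hw i hi
          positivity

theorem Real.div_rpow_neg_mul_mul_pow {a b : ℝ} (ha : 0 < a) (hb : 0 < b) (q : ℝ) (n : ℕ) :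
    (b / a) ^ (-(q * n)) * b ^ n = (a ^ q * b ^ (1 - q)) ^ (n : ℝ) := by
  rw [Real.mul_rpow (by positivity) (by positivity), ← Real.rpow_mul ha.le, ← Real.rpow_mul hb.le,
    Real.rpow_neg (by positivity), ← Real.inv_rpow (by positivity), inv_div,
    Real.div_rpow ha.le hb.le, show (1 - q) * n = n - q * n by ring, Real.rpow_sub hb, Real.rpow_natCast]
  ring

open Classical in
theorem hypergeom_hoeffding_tail_general (N M n : ℕ) (hM0 : 0 < M) (hMN : M < N)
    (hnN : n ≤ N) (t : ℝ) (ht : 0 ≤ t)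
    (hpt : (M : ℝ) / N + t < 1) :
    ∑ i ∈ (Finset.range (n + 1)).filter (fun (i : ℕ) => ((M : ℝ) / N + t) * n ≤ (i : ℝ)),
        ((M.choose i * (N - M).choose (n - i) : ℝ) / (N.choose n : ℝ))
      ≤ (((M : ℝ) / N / ((M : ℝ) / N + t)) ^ ((M : ℝ) / N + t)
          * ((1 - (M : ℝ) / N) / (1 - (M : ℝ) / N - t)) ^ (1 - (M : ℝ) / N - t)) ^ (n : ℝ) := by
  have hN : 0 < N := hM0.trans hMN
  set p : ℝ := (M : ℝ) / N
  have hp0 : 0 < p := by positivity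
  have hp1 : p < 1 := (div_lt_one (by positivity)).2 (by exact_mod_cast hMN)
  rw [sub_sub]
  set q : ℝ := p + t
  set a : ℝ := p / q
  set b : ℝ := (1 - p) / (1 - q)
  have ha0 : 0 < a := by positivity
  have hb0 : 0 < b := div_pos (by linarith) (by linarith)
  -- the minimiser `l = b / a` of `l ^ (-q) * (1 + p * (l - 1))`
  have hl : 1 ≤ b / a := by
    have ha1 : a ≤ 1 := div_le_one_of_le₀ (by linarith) (by positivity)
    have hb1 : 1 ≤ b := (one_le_div (by linarith)).2 (by linarith)
    exact (one_le_div ha0).2 (ha1.trans hb1)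
  have hmgf : 1 + p * (b / a - 1) = b := by
    have : 1 - q ≠ 0 := by linarith
    simp only [a, b]
    field_simp
    ring
  calc _ ≤ (b / a) ^ (-(q * n)) * ∑ i ∈ range (n + 1),
          (M.choose i * (N - M).choose (n - i) : ℝ) / N.choose n * (b / a) ^ i :=
        sum_filter_le_le_rpow_neg_mul_sum_mul_pow (fun i _ => by positivity) hl _
    _ ≤ (b / a) ^ (-(q * n)) * b ^ n := by
        gcongr
        exact (sum_choose_mul_choose_div_choose_mul_pow_le hMN.le hN hnN hl).trans_eq
          (congrArg (· ^ n) hmgf)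
    _ = (a ^ q * b ^ (1 - q)) ^ (n : ℝ) := Real.div_rpow_neg_mul_mul_pow ha0 hb0 q n

open Classical in
theorem hypergeom_hoeffding_tail (N M n : ℕ) (hM0 : 0 < M) (hMN : M < N)
    (hnN : n ≤ N) (hn : 0 < n) (t : ℝ) (ht : 0 ≤ t)
    (hpt : (M : ℝ) / N + t < 1) :
    ∑ i ∈ (Finset.range (n + 1)).filter (fun (i : ℕ) => ((M : ℝ) / N + t) * n ≤ (i : ℝ)),
        ((M.choose i * (N - M).choose (n - i) : ℝ) / (N.choose n : ℝ))
      ≤ (((M : ℝ) / N / ((M : ℝ) / N + t)) ^ ((M : ℝ) / N + t)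
          * ((1 - (M : ℝ) / N) / (1 - (M : ℝ) / N - t)) ^ (1 - (M : ℝ) / N - t)) ^ (n : ℝ) :=
  hypergeom_hoeffding_tail_general N M n hM0 hMN hnN t ht hpt
end

section
/- Chvátal's exponential upper-tail inequality for the hypergeometric distribution: with p = M/N, t ≥ 0, and k = (p+t)·n, one has H(M,N,n,k) ≤ exp(−2t²n). -/
/-!
Chernoff's method with exponent `4t`: the tail is at most `e^{-4tk} E[e^{4tX}]`. The
hypergeometric moment generating function is dominated by the binomial one, because the
factorial moments satisfy `E[C(X, j)] = C(n, j) C(M, j) / C(N, j) ≤ C(n, j) p^j` and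
`E[(1 + z)^X] = ∑ⱼ zʲ E[C(X, j)]` has nonnegative coefficients for `z ≥ 0`. Hoeffding's lemma
for a Bernoulli variable, `1 - p + p e^s ≤ e^{ps + s²/8}`, then gives `e^{-4tk + n(4pt + 2t²)}`,
which is `e^{-2t²n}` for `k = (p + t) n`.
-/

open Finset Real MeasureTheory ProbabilityTheory

namespace Nat

theorem descFactorial_mul_pow_le {M N : ℕ} (hMN : M ≤ N) (j : ℕ) :
    M.descFactorial j * N ^ j ≤ N.descFactorial j * M ^ j := by
  rw [descFactorial_eq_prod_range, descFactorial_eq_prod_range, pow_eq_prod_const N,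
    pow_eq_prod_const M, ← prod_mul_distrib, ← prod_mul_distrib]
  refine prod_le_prod' fun i _ => ?_
  rw [Nat.sub_mul, Nat.sub_mul, Nat.mul_comm M N]
  exact Nat.sub_le_sub_left (Nat.mul_le_mul_left i hMN) _

theorem choose_mul_pow_le {M N : ℕ} (hMN : M ≤ N) (j : ℕ) :
    M.choose j * N ^ j ≤ N.choose j * M ^ j := by
  have h := descFactorial_mul_pow_le hMN j
  rw [descFactorial_eq_factorial_mul_choose, descFactorial_eq_factorial_mul_choose,
    Nat.mul_assoc, Nat.mul_assoc] at h
  exact Nat.le_of_mul_le_mul_left h j.factorial_pos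

theorem cast_choose_le_choose_mul_div_pow {M N : ℕ} (hMN : M ≤ N) (j : ℕ) :
    (M.choose j : ℝ) ≤ N.choose j * ((M : ℝ) / N) ^ j := by
  rcases N.eq_zero_or_pos with rfl | hN
  · obtain rfl : M = 0 := Nat.le_zero.1 hMN
    cases j <;> simp
  rw [div_pow, ← mul_div_assoc, le_div_iff₀ (by positivity)]
  exact_mod_cast choose_mul_pow_le hMN j

theorem sum_choose_mul_choose_mul_choose {M N n j : ℕ} (hMN : M ≤ N) (hjn : j ≤ n) :
    ∑ i ∈ range (n + 1), M.choose i * (N - M).choose (n - i) * i.choose j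
      = M.choose j * (N - j).choose (n - j) := by
  obtain ⟨l, rfl⟩ := Nat.exists_eq_add_of_le hjn
  rw [Nat.add_assoc, sum_range_add, Nat.add_sub_cancel_left,
    sum_eq_zero fun i hi => by rw [choose_eq_zero_of_lt (mem_range.1 hi), Nat.mul_zero], zero_add]
  simp only [Nat.mul_right_comm (M.choose _), choose_mul (Nat.le_add_right j _),
    Nat.add_sub_cancel_left, Nat.add_sub_add_left, Nat.mul_assoc, ← mul_sum]
  rcases le_or_gt j M with hjM | hMj
  · rw [← Finset.Nat.sum_antidiagonal_eq_sum_range_succ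
      (fun a b => (M - j).choose a * (N - M).choose b), ← add_choose_eq,
      show M - j + (N - M) = N - j by omega]
  · rw [choose_eq_zero_of_lt hMj, Nat.zero_mul, Nat.zero_mul]

end Nat

theorem sum_range_mul_add_one_pow {R : Type*} [CommSemiring R] (w : ℕ → R) (z : R) (n : ℕ) :
    ∑ i ∈ range (n + 1), w i * (z + 1) ^ i
      = ∑ j ∈ range (n + 1), z ^ j * ∑ i ∈ range (n + 1), w i * i.choose j := by
  have hexp : ∀ i ∈ range (n + 1), (z + 1) ^ i = ∑ j ∈ range (n + 1), z ^ j * i.choose j := by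
    intro i hi
    simp only [add_pow, one_pow, mul_one]
    refine sum_subset (range_subset_range.2 (by simpa using hi)) fun j _ hj => ?_
    rw [Nat.choose_eq_zero_of_lt (by simpa using hj), Nat.cast_zero, mul_zero]
  rw [sum_congr rfl fun i hi => by rw [hexp i hi, mul_sum], sum_comm]
  simp only [mul_sum]
  exact sum_congr rfl fun j _ => sum_congr rfl fun i _ => by ring

theorem sum_choose_mul_choose_mul_choose_le {M N n j : ℕ} (hMN : M ≤ N) (hjn : j ≤ n) :
    ∑ i ∈ range (n + 1), (M.choose i * (N - M).choose (n - i) : ℝ) * i.choose j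
      ≤ N.choose n * n.choose j * ((M : ℝ) / N) ^ j := by
  have hmoment := congrArg (Nat.cast : ℕ → ℝ) (Nat.sum_choose_mul_choose_mul_choose hMN hjn)
  have hsplit := congrArg (Nat.cast : ℕ → ℝ) (Nat.choose_mul (n := N) hjn)
  push_cast at hmoment hsplit
  rw [hmoment, hsplit, mul_right_comm]
  gcongr
  exact Nat.cast_choose_le_choose_mul_div_pow hMN j

theorem sum_choose_mul_choose_mul_pow_le {M N : ℕ} (hMN : M ≤ N) (n : ℕ) {y : ℝ} (hy : 1 ≤ y) :
    ∑ i ∈ range (n + 1), (M.choose i * (N - M).choose (n - i) : ℝ) * y ^ i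
      ≤ N.choose n * (1 - M / N + M / N * y) ^ n := by
  obtain ⟨z, hz, rfl⟩ : ∃ z, 0 ≤ z ∧ y = z + 1 := ⟨y - 1, by linarith, by ring⟩
  rw [sum_range_mul_add_one_pow]
  calc _ ≤ ∑ j ∈ range (n + 1), z ^ j * (N.choose n * n.choose j * ((M : ℝ) / N) ^ j) := by
        gcongr with j hj
        exact sum_choose_mul_choose_mul_choose_le hMN (by simpa [Nat.lt_succ_iff] using hj)
    _ = N.choose n * (M / N * z + 1) ^ n := by
        rw [add_pow, mul_sum]
        exact sum_congr rfl fun j _ => by ring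
    _ = N.choose n * (1 - M / N + M / N * (z + 1)) ^ n := by ring

theorem one_sub_add_mul_exp_le {p : ℝ} (hp0 : 0 ≤ p) (hp1 : p ≤ 1) (s : ℝ) :
    1 - p + p * exp s ≤ exp (p * s + s ^ 2 / 8) := by
  let μ : Measure ℝ := ENNReal.ofReal (1 - p) • Measure.dirac 0 + ENNReal.ofReal p • Measure.dirac 1
  have : IsProbabilityMeasure μ := ⟨by
    simp [μ, ← ENNReal.ofReal_add (sub_nonneg.2 hp1) hp0]⟩
  have hint (f : ℝ → ℝ) : ∫ x, f x ∂μ = (1 - p) * f 0 + p * f 1 := by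
    rw [integral_add_measure, integral_smul_measure, integral_smul_measure, integral_dirac,
      integral_dirac]
    · simp [hp0, sub_nonneg.2 hp1]
    all_goals exact (integrable_dirac enorm_lt_top).smul_measure ENNReal.ofReal_ne_top
  have hb : ∀ᵐ x ∂μ, id x ∈ Set.Icc (0 : ℝ) 1 :=
    ae_add_measure_iff.2 ⟨Measure.ae_smul_measure (by simp) _, Measure.ae_smul_measure (by simp) _⟩
  have hmgf := (hasSubgaussianMGF_of_mem_Icc aemeasurable_id hb).mgf_le s
  simp only [mgf, hint, id] at hmgf
  norm_num [mul_sub] at hmgf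
  calc 1 - p + p * exp s
      = exp (p * s) * ((1 - p) * exp (-(s * p)) + p * exp (s - s * p)) := by
        rw [exp_sub, exp_neg, mul_comm s p]; field_simp
    _ ≤ exp (p * s) * exp (1 / 4 * s ^ 2 / 2) := by gcongr
    _ = exp (p * s + s ^ 2 / 8) := by rw [← exp_add]; ring_nf

theorem sum_filter_le_exp_mul_sum {ι : Type*} (s : Finset ι) {w f : ι → ℝ}
    (hw : ∀ i ∈ s, 0 ≤ w i) (a : ℝ) [DecidablePred fun i => a ≤ f i] {l : ℝ} (hl : 0 ≤ l) :
    ∑ i ∈ s with a ≤ f i, w i ≤ exp (-(l * a)) * ∑ i ∈ s, w i * exp (l * f i) := by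
  rw [mul_sum]
  calc ∑ i ∈ s with a ≤ f i, w i
      ≤ ∑ i ∈ s with a ≤ f i, exp (-(l * a)) * (w i * exp (l * f i)) := by
        refine sum_le_sum fun i hi => ?_
        obtain ⟨his, hai⟩ := mem_filter.1 hi
        rw [mul_left_comm, ← exp_add]
        exact le_mul_of_one_le_right (hw i his) (one_le_exp (by nlinarith))
    _ ≤ ∑ i ∈ s, exp (-(l * a)) * (w i * exp (l * f i)) :=
        sum_le_sum_of_subset_of_nonneg (filter_subset _ _) fun i hi _ => by
          have := hw i hi; positivity

open Classical in
theorem hypergeom_chvatal_tail_general (N M n : ℕ) (hMN : M ≤ N)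
    (t : ℝ) (ht : 0 ≤ t) :
    ∑ i ∈ (Finset.range (n + 1)).filter (fun (i : ℕ) => ((M : ℝ) / N + t) * n ≤ (i : ℝ)),
        ((M.choose i * (N - M).choose (n - i) : ℝ) / (N.choose n : ℝ))
      ≤ Real.exp (-2 * t ^ 2 * n) := by
  set p : ℝ := (M : ℝ) / N
  have hp0 : 0 ≤ p := by positivity
  have hp1 : p ≤ 1 := div_le_one_of_le₀ (by exact_mod_cast hMN) (Nat.cast_nonneg N)
  calc _ ≤ exp (-(4 * t * ((p + t) * n))) * ∑ i ∈ range (n + 1),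
          (M.choose i * (N - M).choose (n - i) : ℝ) / N.choose n * exp (4 * t * i) :=
        sum_filter_le_exp_mul_sum _ (fun i _ => by positivity) _ (by positivity)
    _ ≤ exp (-(4 * t * ((p + t) * n))) * (1 - p + p * exp (4 * t)) ^ n := by
        gcongr
        simp only [mul_comm (4 * t), exp_nat_mul, div_mul_eq_mul_div, ← sum_div]
        exact div_le_of_le_mul₀ (by positivity) (by positivity) <|
          (sum_choose_mul_choose_mul_pow_le hMN n (one_le_exp (by positivity))).trans_eq
            (mul_comm _ _)
    _ ≤ exp (-(4 * t * ((p + t) * n))) * exp (p * (4 * t) + (4 * t) ^ 2 / 8) ^ n := by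
        gcongr
        exact one_sub_add_mul_exp_le hp0 hp1 _
    _ = exp (-2 * t ^ 2 * n) := by
        rw [← exp_nat_mul, ← exp_add]
        ring_nf

open Classical in
theorem hypergeom_chvatal_tail (N M n : ℕ) (hMN : M ≤ N) (hnN : n ≤ N) (hn : 0 < n)
    (t : ℝ) (ht : 0 ≤ t) (hpt : (M : ℝ) / N + t ≤ 1) :
    ∑ i ∈ (Finset.range (n + 1)).filter (fun (i : ℕ) => ((M : ℝ) / N + t) * n ≤ (i : ℝ)),
        ((M.choose i * (N - M).choose (n - i) : ℝ) / (N.choose n : ℝ))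
      ≤ Real.exp (-2 * t ^ 2 * n) :=
  hypergeom_chvatal_tail_general N M n hMN t ht
end

section
/- The Hoeffding bound implies the Chvátal bound: for all p ∈ [0,1] and t ≥ 0 with p + t ≤ 1, (p/(p+t))^{p+t} · ((1−p)/(1−p−t))^{1−p−t} ≤ e^{−2t²}. -/
/-!
Hoeffding's lemma for a Bernoulli(`p`) variable `X` gives `E[exp (l X)] ≤ exp (l p + l² / 8)`.
Weighted AM–GM with weights `q, 1 - q` shows that the left-hand side, with `q = p + t`, is at most
the Chernoff bound `exp (-l q) E[exp (l X)]` for every `l`; the choice `l = 4 t` yields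
`exp (-2 t²)`.
-/

open Real MeasureTheory ProbabilityTheory unitInterval

lemma one_sub_add_mul_exp_le_exp (p : I) (l : ℝ) :
    1 - p + p * exp l ≤ exp (l * p + l ^ 2 / 8) := by
  set μ : Measure I := Ber(1, 0, p)
  have hoeffding := (hasSubgaussianMGF_of_mem_Icc (μ := μ) measurable_subtype_coe.aemeasurable
    (ae_of_all _ fun x => x.2)).mgf_le l
  have hmgf : mgf (fun x : I => (x : ℝ) - μ[fun y : I => (y : ℝ)]) μ l
      = exp (-(l * p)) * (1 - p + p * exp l) := by
    simp only [μ, mgf, integral_bernoulliMeasure, Set.Icc.coe_one, Set.Icc.coe_zero, smul_eq_mul,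
      mul_one, mul_zero, add_zero, mul_sub, zero_sub, sub_eq_neg_add l, exp_add]
    ring
  have hvariance : ((‖(1 : ℝ) - 0‖₊ / 2) ^ 2 : NNReal) * l ^ 2 / 2 = l ^ 2 / 8 := by
    norm_num; ring
  rw [hmgf, hvariance] at hoeffding
  calc 1 - p + p * exp l = exp (l * p) * (exp (-(l * p)) * (1 - p + p * exp l)) := by
        rw [← mul_assoc, ← exp_add]; simp
    _ ≤ exp (l * p) * exp (l ^ 2 / 8) := by gcongr
    _ = exp (l * p + l ^ 2 / 8) := (exp_add _ _).symm

lemma div_rpow_mul_div_one_sub_rpow_le_add {a b w : ℝ} (ha : 0 ≤ a) (hb : 0 ≤ b) (hw₀ : 0 ≤ w)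
    (hw₁ : w ≤ 1) : (a / w) ^ w * (b / (1 - w)) ^ (1 - w) ≤ a + b := by
  have mul_div_le {c v : ℝ} (hc : 0 ≤ c) (hv : 0 ≤ v) : v * (c / v) ≤ c := by
    rcases hv.eq_or_lt with rfl | hv
    · simpa using hc
    · rw [mul_div_cancel₀ c hv.ne']
  calc (a / w) ^ w * (b / (1 - w)) ^ (1 - w) ≤ w * (a / w) + (1 - w) * (b / (1 - w)) :=
        geom_mean_le_arith_mean2_weighted hw₀ (sub_nonneg.2 hw₁) (div_nonneg ha hw₀)
          (div_nonneg hb (sub_nonneg.2 hw₁)) (add_sub_cancel w 1)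
    _ ≤ a + b := add_le_add (mul_div_le ha hw₀) (mul_div_le hb (sub_nonneg.2 hw₁))

lemma div_rpow_mul_div_one_sub_rpow_le_exp_mul {p q : ℝ} (hp₀ : 0 ≤ p) (hp₁ : p ≤ 1)
    (hq₀ : 0 ≤ q) (hq₁ : q ≤ 1) (l : ℝ) :
    (p / q) ^ q * ((1 - p) / (1 - q)) ^ (1 - q) ≤ exp (-(l * q)) * (1 - p + p * exp l) := by
  have htilt : (p / q) ^ q = exp (-(l * q)) * (p * exp l / q) ^ q := by
    rw [mul_div_right_comm, mul_rpow (div_nonneg hp₀ hq₀) (exp_pos l).le, ← exp_mul,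
      mul_left_comm, ← exp_add, neg_add_cancel, exp_zero, mul_one]
  rw [htilt, mul_assoc, add_comm (1 - p)]
  gcongr
  exact div_rpow_mul_div_one_sub_rpow_le_add (by positivity) (sub_nonneg.2 hp₁) hq₀ hq₁

theorem hoeffding_implies_chvatal (p t : ℝ) (hp : 0 ≤ p) (ht : 0 ≤ t) (hpt : p + t ≤ 1) :
    (p / (p + t)) ^ (p + t) * ((1 - p) / (1 - p - t)) ^ (1 - p - t)
      ≤ Real.exp (-2 * t ^ 2) := by
  have hp₁ : p ≤ 1 := by linarith
  rw [sub_sub]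
  calc (p / (p + t)) ^ (p + t) * ((1 - p) / (1 - (p + t))) ^ (1 - (p + t))
      ≤ exp (-(4 * t * (p + t))) * (1 - p + p * exp (4 * t)) :=
        div_rpow_mul_div_one_sub_rpow_le_exp_mul hp hp₁ (by linarith) hpt (4 * t)
    _ ≤ exp (-(4 * t * (p + t))) * exp (4 * t * p + (4 * t) ^ 2 / 8) := by
        gcongr
        exact one_sub_add_mul_exp_le_exp ⟨p, hp, hp₁⟩ (4 * t)
    _ = exp (-2 * t ^ 2) := by rw [← exp_add]; ring_nf
end
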